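/- Let Σ be a nonempty finite alphabet with k letters, let U_Σ = {x ∈ Σ* | every letter of Σ occurs in x} and U'_Σ = Σ·U_Σ (the words consisting of an arbitrary letter of Σ followed by a word of U_Σ). Then nN(U'_Σ) = nD(U'_Σ) = 2^k + 1. -/

import Mathlib

/-- An accepting run of an NFA on a word `w`: a sequence of `|w|+1` states starting
in an initial state, ending in an accepting state, and following the transitions. -/
def NFA.IsAcceptingRun {α σ : Type*} (M : NFA α σ) (w : List α)
    (r : Fin (w.length + 1) → σ) : Prop :=
  r 0 ∈ M.start ∧ r (Fin.last w.length) ∈ M.accept ∧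
    ∀ i : Fin w.length, r i.succ ∈ M.step (r i.castSucc) (w.get i)

/-- An NFA is unambiguous (a UFA) if every word has at most one accepting run. -/
def NFA.Unambiguous {α σ : Type*} (M : NFA α σ) : Prop :=
  ∀ (w : List α) (r₁ r₂ : Fin (w.length + 1) → σ),
    M.IsAcceptingRun w r₁ → M.IsAcceptingRun w r₂ → r₁ = r₂

/-- A deterministic NFA (a DFA with a possibly partial transition function):
exactly one initial state and at most one successor per state and letter. -/
def NFA.Deterministic {α σ : Type*} (M : NFA α σ) : Prop :=
  (∃ q₀, M.start = {q₀}) ∧ ∀ q a, (M.step q a).Subsingleton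

/-- Minimal number of states of an NFA recognizing `L` (`nN(L)`). -/
noncomputable def nN {α : Type} (L : Language α) : ℕ :=
  sInf {n | ∃ (σ : Type) (inst : Fintype σ) (M : NFA α σ),
    @Fintype.card σ inst = n ∧ M.accepts = L}

/-- Minimal number of states of a DFA (partial transition function allowed)
recognizing `L` (`nD(L)`). -/
noncomputable def nD {α : Type} (L : Language α) : ℕ :=
  sInf {n | ∃ (σ : Type) (inst : Fintype σ) (M : NFA α σ),
    M.Deterministic ∧ @Fintype.card σ inst = n ∧ M.accepts = L}

/-- Minimal number of states of an unambiguous NFA recognizing `L` (`nU(L)`). -/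
noncomputable def nU {α : Type} (L : Language α) : ℕ :=
  sInf {n | ∃ (σ : Type) (inst : Fintype σ) (M : NFA α σ),
    M.Unambiguous ∧ @Fintype.card σ inst = n ∧ M.accepts = L}

/-- Upward closure: all superwords (w.r.t. the scattered-subword ordering
`List.Sublist`) of words of `L`. -/
def upClosure {α : Type} (L : Language α) : Language α := {x | ∃ y ∈ L, y.Sublist x}

/-- Downward closure: all subwords of words of `L`. -/
def downClosure {α : Type} (L : Language α) : Language α := {x | ∃ y ∈ L, x.Sublist y}

/-- Upward interior: words all of whose superwords are in `L`. -/
def upInterior {α : Type} (L : Language α) : Language α := {x | ∀ y, x.Sublist y → y ∈ L}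

/-- Downward interior: words all of whose subwords are in `L`. -/
def downInterior {α : Type} (L : Language α) : Language α := {x | ∀ y, y.Sublist x → y ∈ L}

/-! The automaton skips the first letter and then remembers the set of letters read so far, which
gives `2^k + 1` states. Conversely, the pairs `(ε, a·Σ)` and `(a·S, Σ∖S)` for `S ⊆ Σ`, each word
listed once, form an extended fooling set of size `2^k + 1`: gluing the prefix of `S` to the suffix
of `T` stays in `U'` only if `T ⊆ S`, and a word without repeated letters is never in `U'`. -/

namespace NFA

variable {α σ : Type*}

theorem append_mem_accepts_iff (M : NFA α σ) {x y : List α} :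
    x ++ y ∈ M.accepts ↔ ∃ q ∈ M.eval x, y ∈ M.acceptsFrom {q} := by
  rw [accepts_eq_acceptsFrom_start, append_mem_acceptsFrom, mem_acceptsFrom]
  constructor
  · rintro ⟨f, hf, hfy⟩
    obtain ⟨q, hq, hqf⟩ := mem_evalFrom_iff_exists.1 hfy
    exact ⟨q, hq, f, hf, hqf⟩
  · rintro ⟨q, hq, f, hf, hqf⟩
    exact ⟨f, hf, mem_evalFrom_iff_exists.2 ⟨q, hq, hqf⟩⟩

/-- The extended fooling set technique (Birget). -/
theorem card_le_card_of_isFooling {ι : Type*} [Fintype ι] [Fintype σ] (M : NFA α σ)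
    (x y : ι → List α) (hmem : ∀ i, x i ++ y i ∈ M.accepts)
    (hfool : ∀ i j, x i ++ y j ∈ M.accepts → x j ++ y i ∈ M.accepts → i = j) :
    Fintype.card ι ≤ Fintype.card σ := by
  choose q hq hqy using fun i => M.append_mem_accepts_iff.1 (hmem i)
  refine Fintype.card_le_of_injective q fun i j hij => hfool i j ?_ ?_
  · exact M.append_mem_accepts_iff.2 ⟨q i, hq i, hij ▸ hqy j⟩
  · exact M.append_mem_accepts_iff.2 ⟨q j, hq j, hij ▸ hqy i⟩

end NFA

theorem DFA.toNFA_deterministic {α σ : Type*} (M : DFA α σ) : M.toNFA.Deterministic :=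
  ⟨⟨M.start, rfl⟩, fun _ _ => Set.subsingleton_singleton⟩

section Minimal

variable {α : Type} {L : Language α} {n : ℕ}

theorem nN_eq_of_le_card {σ : Type} [Fintype σ] (M : NFA α σ) (hM : M.accepts = L)
    (hcard : Fintype.card σ = n)
    (hmin : ∀ (τ : Type) [Fintype τ] (N : NFA α τ), N.accepts = L → n ≤ Fintype.card τ) :
    nN L = n :=
  le_antisymm (Nat.sInf_le ⟨σ, _, M, hcard, hM⟩)
    (le_csInf ⟨n, σ, _, M, hcard, hM⟩ fun _ ⟨τ, _, N, hN, hNL⟩ => hN ▸ hmin τ N hNL)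

theorem nD_eq_of_le_card {σ : Type} [Fintype σ] (M : NFA α σ) (hdet : M.Deterministic)
    (hM : M.accepts = L) (hcard : Fintype.card σ = n)
    (hmin : ∀ (τ : Type) [Fintype τ] (N : NFA α τ), N.Deterministic → N.accepts = L →
      n ≤ Fintype.card τ) :
    nD L = n :=
  le_antisymm (Nat.sInf_le ⟨σ, _, M, hdet, hcard, hM⟩)
    (le_csInf ⟨n, σ, _, M, hdet, hcard, hM⟩ fun _ ⟨τ, _, N, hNdet, hN, hNL⟩ =>
      hN ▸ hmin τ N hNdet hNL)

end Minimal

/-- The language `U'_Σ = Σ·U_Σ`. -/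
def letterThenPangram (α : Type*) : Language α :=
  {x | ∃ (a : α) (w : List α), x = a :: w ∧ ∀ b : α, b ∈ w}

section LetterThenPangram

variable {α : Type*}

theorem nil_notMem_letterThenPangram : [] ∉ letterThenPangram α :=
  fun ⟨a, w, h, _⟩ => List.cons_ne_nil a w h.symm

theorem cons_mem_letterThenPangram {a : α} {w : List α} :
    a :: w ∈ letterThenPangram α ↔ ∀ b : α, b ∈ w := by
  refine ⟨?_, fun hw => ⟨a, w, rfl, hw⟩⟩
  rintro ⟨a', w', h, hw'⟩
  rwa [(List.cons_eq_cons.1 h).2]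

theorem notMem_letterThenPangram_of_nodup {x : List α} (hx : x.Nodup) :
    x ∉ letterThenPangram α := by
  rintro ⟨a, w, rfl, hw⟩
  exact (List.nodup_cons.1 hx).1 (hw a)

theorem cons_toList_append_mem_letterThenPangram_iff [Fintype α] [DecidableEq α] (a : α)
    (S T : Finset α) : a :: (S.toList ++ Tᶜ.toList) ∈ letterThenPangram α ↔ T ⊆ S := by
  simp only [cons_mem_letterThenPangram, List.mem_append, Finset.mem_toList, Finset.mem_compl]
  exact ⟨fun h b hb => (h b).resolve_right (not_not.2 hb), fun h b => or_not_of_imp (@h b)⟩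

variable [Fintype α]

variable (α) in
@[simps]
def letterThenPangramDFA [DecidableEq α] : DFA α (Option (Finset α)) where
  step q a := some (q.elim ∅ (insert a))
  start := none
  accept := {some Finset.univ}

theorem letterThenPangramDFA_evalFrom_some [DecidableEq α] (S : Finset α) (w : List α) :
    (letterThenPangramDFA α).evalFrom (some S) w = some (S ∪ w.toFinset) := by
  induction w generalizing S with
  | nil => simp
  | cons a w ih =>
    simp [DFA.evalFrom_cons, ih, Finset.insert_union]

theorem letterThenPangramDFA_accepts [DecidableEq α] :
    (letterThenPangramDFA α).accepts = letterThenPangram α := by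
  ext (_ | ⟨a, w⟩)
  · simp [DFA.mem_accepts, nil_notMem_letterThenPangram]
  · simp [DFA.mem_accepts, DFA.eval, DFA.evalFrom_cons, cons_mem_letterThenPangram,
      letterThenPangramDFA_evalFrom_some, Finset.eq_univ_iff_forall]

theorem two_pow_card_add_one_le_of_accepts_eq [Nonempty α] {σ : Type*} [Fintype σ]
    (M : NFA α σ) (hM : M.accepts = letterThenPangram α) :
    2 ^ Fintype.card α + 1 ≤ Fintype.card σ := by
  classical
  obtain ⟨a⟩ := ‹Nonempty α›
  have hcard : Fintype.card (Option (Finset α)) = 2 ^ Fintype.card α + 1 := by simp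
  rw [← hcard]
  refine M.card_le_card_of_isFooling (fun o => o.elim [] fun S => a :: S.toList)
    (fun o => o.elim (a :: Finset.univ.toList) fun S => Sᶜ.toList) ?_ ?_ <;> rw [hM]
  · rintro (_ | S)
    · simp [cons_mem_letterThenPangram]
    · simpa using (cons_toList_append_mem_letterThenPangram_iff a S S).2 subset_rfl
  · have hcompl (S : Finset α) : Sᶜ.toList ∉ letterThenPangram α :=
      notMem_letterThenPangram_of_nodup (Finset.nodup_toList _)
    rintro (_ | S) (_ | T) hST hTS
    · rfl
    · exact absurd hST (hcompl T)
    · exact absurd hTS (hcompl S)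
    · simp only [Option.elim, List.cons_append, cons_toList_append_mem_letterThenPangram_iff]
        at hST hTS
      rw [Finset.Subset.antisymm hTS hST]

end LetterThenPangram

/-- For a nonempty `k`-letter alphabet, the language `U'_Σ = Σ·U_Σ` (an arbitrary
letter followed by a word in which every letter of `Σ` occurs) satisfies
`nN(U'_Σ) = nD(U'_Σ) = 2^k + 1`. -/
theorem nN_nD_of_U' {α : Type} [Fintype α] [Nonempty α] (k : ℕ)
    (hk : Fintype.card α = k) (U' : Language α)
    (hU' : U' = {x | ∃ (a : α) (w : List α), x = a :: w ∧ ∀ b : α, b ∈ w}) :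
    nN U' = 2 ^ k + 1 ∧ nD U' = 2 ^ k + 1 := by
  classical
  obtain rfl : U' = letterThenPangram α := hU'
  have hcard : Fintype.card (Option (Finset α)) = 2 ^ k + 1 := by simp [hk]
  have hM : (letterThenPangramDFA α).toNFA.accepts = letterThenPangram α := by
    rw [DFA.toNFA_correct, letterThenPangramDFA_accepts]
  have hmin (τ : Type) [Fintype τ] (N : NFA α τ) (hN : N.accepts = letterThenPangram α) :
      2 ^ k + 1 ≤ Fintype.card τ :=
    hk ▸ two_pow_card_add_one_le_of_accepts_eq N hN
  exact ⟨nN_eq_of_le_card _ hM hcard hmin,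
    nD_eq_of_le_card _ (DFA.toNFA_deterministic _) hM hcard fun τ _ N _ => hmin τ N⟩
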